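/- arXiv:1306.3892 — 2 statements merged into one kernel-verified Lean document; each statement's English description precedes it below -/
import Mathlib

section
/- With the type A₂ action on ℂ[x,y] (s(x) = -x, s(y) = x+y, t(y) = -y, t(x) = x+y, α_s = x, α_t = y), the Demazure operators satisfy the braid relation δ_s ∘ δ_t ∘ δ_s = δ_t ∘ δ_s ∘ δ_t as operators on ℂ[x,y]. -/
open MvPolynomial

/-- The type A₂ reflection `s` on `ℂ[x,y]`: `s(x) = -x`, `s(y) = x + y`. -/
noncomputable def sA2 : MvPolynomial (Fin 2) ℂ →ₐ[ℂ] MvPolynomial (Fin 2) ℂ :=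
  aeval ![-(X 0), X 0 + X 1]

/-- The type A₂ reflection `t` on `ℂ[x,y]`: `t(x) = x + y`, `t(y) = -y`. -/
noncomputable def tA2 : MvPolynomial (Fin 2) ℂ →ₐ[ℂ] MvPolynomial (Fin 2) ℂ :=
  aeval ![X 0 + X 1, -(X 1)]

lemma sX0 : sA2 (X 0) = -(X 0) := by simp [sA2]
lemma sX1 : sA2 (X 1) = X 0 + X 1 := by simp [sA2]
lemma tX0 : tA2 (X 0) = X 0 + X 1 := by simp [tA2]
lemma tX1 : tA2 (X 1) = -(X 1) := by simp [tA2]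

lemma hss : ∀ f, sA2 (sA2 f) = f := by
  have : sA2.comp sA2 = AlgHom.id ℂ _ := by
    apply MvPolynomial.algHom_ext; intro i
    fin_cases i <;> simp [sA2]
  intro f; exact DFunLike.congr_fun this f

lemma htt : ∀ f, tA2 (tA2 f) = f := by
  have : tA2.comp tA2 = AlgHom.id ℂ _ := by
    apply MvPolynomial.algHom_ext; intro i
    fin_cases i <;> simp [tA2]
  intro f; exact DFunLike.congr_fun this f

lemma hbraid : ∀ f, sA2 (tA2 (sA2 f)) = tA2 (sA2 (tA2 f)) := by
  have : (sA2.comp tA2).comp sA2 = (tA2.comp sA2).comp tA2 := by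
    apply MvPolynomial.algHom_ext; intro i
    fin_cases i <;> simp [sA2, tA2]
  intro f; exact DFunLike.congr_fun this f

lemma hX01 : (X 0 + X 1 : MvPolynomial (Fin 2) ℂ) ≠ 0 := by
  intro h
  have := congrArg (coeff (Finsupp.single 0 1)) h
  simp [coeff_X', Finsupp.single_eq_single_iff] at this

/-- With the type A₂ action on `ℂ[x,y]` (`α_s = x`, `α_t = y`), the Demazure operators
`δ_s = (s-1)/x` and `δ_t = (t-1)/y` satisfy the braid relation
`δ_s ∘ δ_t ∘ δ_s = δ_t ∘ δ_s ∘ δ_t`. -/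
theorem stmt_14
    (δs δt : MvPolynomial (Fin 2) ℂ → MvPolynomial (Fin 2) ℂ)
    (hδs : ∀ f, (X 0 : MvPolynomial (Fin 2) ℂ) * δs f = sA2 f - f)
    (hδt : ∀ f, (X 1 : MvPolynomial (Fin 2) ℂ) * δt f = tA2 f - f) :
    ∀ f, δs (δt (δs f)) = δt (δs (δt f)) := by
  have key : ∀ f, X 0 * (X 0 * X 1 * (X 0 + X 1)) * δs (δt (δs f)) =
      X 0 * (sA2 (tA2 (sA2 f)) - sA2 (tA2 f) - tA2 (sA2 f) + tA2 f + sA2 f - f) := by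
    intro f
    have h1 := hδs f
    have h2 := hδt (δs f)
    have h3 := hδs (δt (δs f))
    have h4 := congrArg tA2 h1
    simp only [map_mul, map_sub, map_add, tX0] at h4
    have h5 := congrArg sA2 h2
    simp only [map_mul, map_sub, map_add, sX1] at h5
    have h6 := congrArg sA2 h1
    simp only [map_mul, map_sub, map_add, sX0, hss] at h6
    have h7 := congrArg sA2 h4
    simp only [map_mul, map_sub, map_add, sX0, sX1] at h7
    linear_combination (X 0 * X 1 * (X 0 + X 1)) * h3 + (X 0 * X 1) * h5 + X 0 * h7 +
      X 1 * h6 - (X 0 * (X 0 + X 1)) * h2 - X 0 * h4 + (X 0 + X 1) * h1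
  have key' : ∀ f, X 1 * (X 0 * X 1 * (X 0 + X 1)) * δt (δs (δt f)) =
      X 1 * (tA2 (sA2 (tA2 f)) - tA2 (sA2 f) - sA2 (tA2 f) + sA2 f + tA2 f - f) := by
    intro f
    have h1 := hδt f
    have h2 := hδs (δt f)
    have h3 := hδt (δs (δt f))
    have h4 := congrArg sA2 h1
    simp only [map_mul, map_sub, map_add, sX1] at h4
    have h5 := congrArg tA2 h2
    simp only [map_mul, map_sub, map_add, tX0] at h5
    have h6 := congrArg tA2 h1
    simp only [map_mul, map_sub, map_add, tX1, htt] at h6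
    have h7 := congrArg tA2 h4
    simp only [map_mul, map_sub, map_add, tX0, tX1] at h7
    linear_combination (X 0 * X 1 * (X 0 + X 1)) * h3 + (X 0 * X 1) * h5 + X 1 * h7 +
      X 0 * h6 - (X 1 * (X 0 + X 1)) * h2 - X 1 * h4 + (X 0 + X 1) * h1
  intro f
  have hP : (X 0 * X 1 * (X 0 * X 1 * (X 0 + X 1)) : MvPolynomial (Fin 2) ℂ) ≠ 0 := by
    refine mul_ne_zero (mul_ne_zero (X_ne_zero _) (X_ne_zero _))
      (mul_ne_zero (mul_ne_zero (X_ne_zero _) (X_ne_zero _)) hX01)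
  apply mul_left_cancel₀ hP
  linear_combination (X 1) * key f - (X 0) * key' f + (X 0 * X 1) * hbraid f
end

section
/- With the type A₂ action on ℂ[x, y] (s(x) = -x, s(y) = x+y, t(y) = -y, t(x) = x+y, α_s = x, α_t = y) and Demazure operators δ_s, δ_t, define for h ∈ ℕ the operators D_s(f) = α_s^h δ_s(f) and D_t(f) = α_t^h δ_t(f). Then D_s D_t D_s - D_t D_s D_t = Q_s·D_s - Q_t·D_t as operators on ℂ[x,y], where Q_s = δ_s(α_t^h δ_t(α_s^h)) and Q_t = δ_t(α_s^h δ_s(α_t^h)) are polynomials in x, y (here Q·D denotes multiplication by Q composed with D). -/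
open MvPolynomial

lemma ss (f : MvPolynomial (Fin 2) ℂ) : sA2 (sA2 f) = f := by
  have : sA2.comp sA2 = AlgHom.id ℂ _ := by
    apply MvPolynomial.algHom_ext; intro i; fin_cases i <;>
      simp [sX0, sX1, map_add, map_neg]
  exact AlgHom.congr_fun this f

lemma tt' (f : MvPolynomial (Fin 2) ℂ) : tA2 (tA2 f) = f := by
  have : tA2.comp tA2 = AlgHom.id ℂ _ := by
    apply MvPolynomial.algHom_ext; intro i; fin_cases i <;>
      simp [tX0, tX1, map_add, map_neg]
  exact AlgHom.congr_fun this f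

lemma stst (f : MvPolynomial (Fin 2) ℂ) : sA2 (tA2 (sA2 f)) = tA2 (sA2 (tA2 f)) := by
  have : sA2.comp (tA2.comp sA2) = tA2.comp (sA2.comp tA2) := by
    apply MvPolynomial.algHom_ext; intro i; fin_cases i <;>
      simp [sX0, sX1, tX0, tX1, map_add, map_neg]
  exact AlgHom.congr_fun this f

lemma stX0 : sA2 (tA2 (X 0)) = X 1 := by
  rw [tX0, map_add, sX0, sX1]; ring
lemma tsX1 : tA2 (sA2 (X 1)) = X 0 := by
  rw [sX1, map_add, tX0, tX1]; ring

/-- Type A₂ on `ℂ[x,y]` (`α_s = x`, `α_t = y`), Demazure operators `δ_s, δ_t`, and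
`D_s(f) = α_s^h δ_s(f)`, `D_t(f) = α_t^h δ_t(f)` for a fixed `h ∈ ℕ`.  Then
`D_s D_t D_s - D_t D_s D_t = Q_s·D_s - Q_t·D_t` where
`Q_s = δ_s(α_t^h δ_t(α_s^h))` and `Q_t = δ_t(α_s^h δ_s(α_t^h))`. -/
theorem stmt_16 (h : ℕ)
    (δs δt : MvPolynomial (Fin 2) ℂ → MvPolynomial (Fin 2) ℂ)
    (hδs : ∀ f, (X 0 : MvPolynomial (Fin 2) ℂ) * δs f = sA2 f - f)
    (hδt : ∀ f, (X 1 : MvPolynomial (Fin 2) ℂ) * δt f = tA2 f - f) :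
    ∀ f, (X 0) ^ h * δs ((X 1) ^ h * δt ((X 0) ^ h * δs f))
        - (X 1) ^ h * δt ((X 0) ^ h * δs ((X 1) ^ h * δt f))
      = δs ((X 1) ^ h * δt ((X 0) ^ h)) * ((X 0) ^ h * δs f)
        - δt ((X 0) ^ h * δs ((X 1) ^ h)) * ((X 1) ^ h * δt f) := by
  have hX0 : (X 0 : MvPolynomial (Fin 2) ℂ) ≠ 0 := X_ne_zero _
  have hX1 : (X 1 : MvPolynomial (Fin 2) ℂ) ≠ 0 := X_ne_zero _
  have hXs : (X 0 + X 1 : MvPolynomial (Fin 2) ℂ) ≠ 0 := by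
    intro hc
    have := congrArg (eval fun _ => (1:ℂ)) hc
    simp at this
  have c0 : ∀ a b : MvPolynomial (Fin 2) ℂ, X 0 * a = X 0 * b → a = b :=
    fun a b => mul_left_cancel₀ hX0
  have c1 : ∀ a b : MvPolynomial (Fin 2) ℂ, X 1 * a = X 1 * b → a = b :=
    fun a b => mul_left_cancel₀ hX1
  have sδs : ∀ f, sA2 (δs f) = δs f := by
    intro f
    apply c0
    have e := congrArg sA2 (hδs f)
    rw [map_mul, sX0, map_sub, ss] at e
    linear_combination -e - hδs f
  have tδt : ∀ f, tA2 (δt f) = δt f := by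
    intro f
    apply c1
    have e := congrArg tA2 (hδt f)
    rw [map_mul, tX1, map_sub, tt'] at e
    linear_combination -e - hδt f
  have δs_mul : ∀ g f, δs (g * f) = δs g * f + sA2 g * δs f := by
    intro g f
    apply c0
    rw [hδs, map_mul]
    linear_combination -f * hδs g - sA2 g * hδs f
  have δt_mul : ∀ g f, δt (g * f) = δt g * f + tA2 g * δt f := by
    intro g f
    apply c1
    rw [hδt, map_mul]
    linear_combination -f * hδt g - tA2 g * hδt f
  have δs_add : ∀ g f, δs (g + f) = δs g + δs f := by
    intro g f
    apply c0
    rw [hδs, map_add]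
    linear_combination -hδs g - hδs f
  have δt_add : ∀ g f, δt (g + f) = δt g + δt f := by
    intro g f
    apply c1
    rw [hδt, map_add]
    linear_combination -hδt g - hδt f
  have δs_sq : ∀ f, δs (δs f) = 0 := by
    intro f
    apply c0
    rw [hδs, sδs]
    ring
  have δt_sq : ∀ f, δt (δt f) = 0 := by
    intro f
    apply c1
    rw [hδt, tδt]
    ring
  have δs_inv : ∀ g, sA2 g = g → δs g = 0 := by
    intro g hg
    apply c0
    rw [hδs, hg]
    ring
  have δt_inv : ∀ g, tA2 g = g → δt g = 0 := by
    intro g hg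
    apply c1
    rw [hδt, hg]
    ring
  -- braid relation for the Demazure operators
  have braid : ∀ f, δs (δt (δs f)) = δt (δs (δt f)) := by
    intro f
    have hP : (X 0 * (X 1 * (X 0 + X 1)) : MvPolynomial (Fin 2) ℂ) ≠ 0 :=
      mul_ne_zero hX0 (mul_ne_zero hX1 hXs)
    apply mul_left_cancel₀ hP
    have L : X 0 * (X 1 * (X 0 + X 1)) * δs (δt (δs f))
        = sA2 (tA2 (sA2 f)) - sA2 (tA2 f) - tA2 (sA2 f) + tA2 f + sA2 f - f := by
      have e1 := hδs (δt (δs f))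
      have e2 := congrArg sA2 (hδt (δs f))
      rw [map_mul, sX1, map_sub, sδs] at e2
      have e3 := congrArg (fun g => sA2 (tA2 g)) (hδs f)
      simp only [map_mul, map_sub, tX0, map_add, sX0, sX1] at e3
      have e3' : X 1 * sA2 (tA2 (δs f)) = sA2 (tA2 (sA2 f)) - sA2 (tA2 f) := by
        linear_combination e3
      have e4 := congrArg tA2 (hδs f)
      rw [map_mul, tX0, map_sub] at e4
      have e5 := hδt (δs f)
      have e6 := hδs f
      linear_combination (X 1 * (X 0 + X 1)) * e1 + X 1 * e2 + e3'
        - (X 0 + X 1) * e5 - e4 + e6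
    have R : X 0 * (X 1 * (X 0 + X 1)) * δt (δs (δt f))
        = tA2 (sA2 (tA2 f)) - tA2 (sA2 f) - sA2 (tA2 f) + sA2 f + tA2 f - f := by
      have e1 := hδt (δs (δt f))
      have e2 := congrArg tA2 (hδs (δt f))
      rw [map_mul, tX0, map_sub, tδt] at e2
      have e3 := congrArg (fun g => tA2 (sA2 g)) (hδt f)
      simp only [map_mul, map_sub, sX1, map_add, tX0, tX1] at e3
      have e3' : X 0 * tA2 (sA2 (δt f)) = tA2 (sA2 (tA2 f)) - tA2 (sA2 f) := by
        linear_combination e3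
      have e4 := congrArg sA2 (hδt f)
      rw [map_mul, sX1, map_sub] at e4
      have e5 := hδs (δt f)
      have e6 := hδt f
      linear_combination (X 0 * (X 0 + X 1)) * e1 + X 0 * e2 + e3'
        - (X 0 + X 1) * e5 - e4 + e6
    rw [L, R, stst f]; ring
  -- invariance facts
  have sinv : sA2 ((X 1 : MvPolynomial (Fin 2) ℂ) ^ h * (X 0 + X 1) ^ h)
      = (X 1 : MvPolynomial (Fin 2) ℂ) ^ h * (X 0 + X 1) ^ h := by
    rw [map_mul, map_pow, map_pow, sX1, map_add, sX0, sX1]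
    ring
  have tinv : tA2 ((X 0 : MvPolynomial (Fin 2) ℂ) ^ h * (X 0 + X 1) ^ h)
      = (X 0 : MvPolynomial (Fin 2) ℂ) ^ h * (X 0 + X 1) ^ h := by
    rw [map_mul, map_pow, map_pow, tX0, map_add, tX0, tX1]
    ring
  intro f
  have s2 : (X 1 : MvPolynomial (Fin 2) ℂ) ^ h * δt (X 0 ^ h * δs f)
      = (X 1 ^ h * δt (X 0 ^ h)) * δs f
        + (X 1 ^ h * (X 0 + X 1) ^ h) * δt (δs f) := by
    rw [δt_mul, map_pow, tX0]; ring
  have key1 : (X 0 : MvPolynomial (Fin 2) ℂ) ^ h * δs (X 1 ^ h * δt (X 0 ^ h * δs f))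
      = δs (X 1 ^ h * δt (X 0 ^ h)) * (X 0 ^ h * δs f)
        + (X 0 ^ h * (X 1 ^ h * (X 0 + X 1) ^ h)) * δs (δt (δs f)) := by
    rw [s2, δs_add, δs_mul _ (δs f), δs_mul _ (δt (δs f)), δs_sq,
       δs_inv _ sinv, sinv]
    ring
  have t2 : (X 0 : MvPolynomial (Fin 2) ℂ) ^ h * δs (X 1 ^ h * δt f)
      = (X 0 ^ h * δs (X 1 ^ h)) * δt f
        + (X 0 ^ h * (X 0 + X 1) ^ h) * δs (δt f) := by
    rw [δs_mul, map_pow, sX1]; ring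
  have key2 : (X 1 : MvPolynomial (Fin 2) ℂ) ^ h * δt (X 0 ^ h * δs (X 1 ^ h * δt f))
      = δt (X 0 ^ h * δs (X 1 ^ h)) * (X 1 ^ h * δt f)
        + (X 1 ^ h * (X 0 ^ h * (X 0 + X 1) ^ h)) * δt (δs (δt f)) := by
    rw [t2, δt_add, δt_mul _ (δt f), δt_mul _ (δs (δt f)), δt_sq,
       δt_inv _ tinv, tinv]
    ring
  rw [key1, key2, braid f]
  ring
end
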